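/- (Uniqueness of envelope extension, strong version.) Let ω be a nonempty factor of the doubling sequence D∞ with Env(ω) = E_{m,i}, and let μ₁, μ₂ be the unique words with E_{m,i} = μ₁·ω·μ₂. Then for every p ≥ 1 the p-th occurrence of ω in D∞ lies inside the p-th occurrence of E_{m,i}: L(ω,p) = L(E_{m,i},p) + |μ₁|. Equivalently, the set of starting positions of occurrences of ω in D∞ is exactly { L(E_{m,i},p) + |μ₁| : p ≥ 1 }. -/

import Mathlib

namespace PD

/-- The period-doubling substitution on the alphabet `Bool`,
where `false` stands for the letter `a` and `true` for the letter `b`: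
`σ(a) = ab`, `σ(b) = aa`. -/
def sub : Bool → List Bool
  | false => [false, true]
  | true  => [false, false]

/-- The substitution applied to a finite word. -/
def subW (w : List Bool) : List Bool := w.flatMap sub

/-- `A m = σ^m(a)`. -/
def A (m : ℕ) : List Bool := subW^[m] [false]

/-- `B m = σ^m(b)`. -/
def B (m : ℕ) : List Bool := subW^[m] [true]

/-- The doubling sequence `D∞` (0-indexed: `D n` is the `(n+1)`-th letter),
the fixed point of `σ` beginning with `a`; `A m` is a prefix of `A (m+1)`,
and `A (n+1)` has length `2^(n+1) > n`. -/
def D (n : ℕ) : Bool := (A (n + 1)).getD n false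

/-- `δ m`, the last letter of `A m`. -/
def delta (m : ℕ) : Bool := (A m).getLastD false

/-- The envelope words (`i ∈ {1,2}`): `E m 1 = A m` minus its last letter,
`E m 2 = A (m-1) ++ (A m` minus its last letter `)`. -/
def E (m i : ℕ) : List Bool :=
  if i = 1 then (A m).dropLast else A (m - 1) ++ (A m).dropLast

/-- `w` occurs at the (1-indexed) position `j` in the finite word `τ`. -/
def OccursIn (w τ : List Bool) (j : ℕ) : Prop :=
  1 ≤ j ∧ (τ.drop (j - 1)).take w.length = w

/-- `w` occurs at the (1-indexed) position `j` in the doubling sequence. -/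
def OccursD (w : List Bool) (j : ℕ) : Prop :=
  1 ≤ j ∧ ∀ k < w.length, D (j - 1 + k) = w.getD k false

/-- `w` is a factor of the doubling sequence. -/
def FactorD (w : List Bool) : Prop := ∃ j, OccursD w j

/-- `L w p`: the (1-indexed) starting position of the `p`-th occurrence of `w`
in the doubling sequence, occurrences being ordered by starting position.
(Each factor occurs infinitely often, so `Nat.nth` enumerates all occurrences
in increasing order.) -/
noncomputable def L (w : List Bool) (p : ℕ) : ℕ := Nat.nth (OccursD w) (p - 1)

/-- The strict total order on envelope words:
`E m₁ i₁ ⊏ E m₂ i₂` iff `m₁ < m₂`, or `m₁ = m₂` and `i₁ < i₂`. -/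
def EnvLt (m₁ i₁ m₂ i₂ : ℕ) : Prop := m₁ < m₂ ∨ (m₁ = m₂ ∧ i₁ < i₂)

/-- `Env(w) = E m i`: the envelope word `E m i` is the `⊏`-minimal envelope
word containing `w` as a factor. -/
def IsEnv (w : List Bool) (m i : ℕ) : Prop :=
  1 ≤ m ∧ (i = 1 ∨ i = 2) ∧ w <:+: E m i ∧
    ∀ m' i', 1 ≤ m' → (i' = 1 ∨ i' = 2) → EnvLt m' i' m i → ¬ w <:+: E m' i'

/-- The substitution `φ₁(a) = a`, `φ₁(b) = bb`. -/
def phi1 : Bool → List Bool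
  | false => [false]
  | true  => [true, true]

/-- `Θ₁ = φ₁(D∞)` (0-indexed): `φ₁(A (n+1))` is a prefix of `Θ₁` of length `> n`. -/
def Theta1 (n : ℕ) : Bool := ((A (n + 1)).flatMap phi1).getD n false

/-- The substitution `φ₂(a) = ab`, `φ₂(b) = acac`, over the alphabet `Fin 3`
where `0` stands for `a`, `1` for `b` and `2` for `c`. -/
def phi2 : Bool → List (Fin 3)
  | false => [0, 1]
  | true  => [0, 2, 0, 2]

/-- `Θ₂ = φ₂(D∞)` (0-indexed). -/
def Theta2 (n : ℕ) : Fin 3 := ((A (n + 1)).flatMap phi2).getD n 0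

/-- `N₁(x,p)`: the number of letters `x` among the first `p` letters of `Θ₁`. -/
def N1 (x : Bool) (p : ℕ) : ℕ := ((List.range p).map Theta1).count x

/-- `N₂(x,p)`: the number of letters `x` among the first `p` letters of `Θ₂`. -/
def N2 (x : Fin 3) (p : ℕ) : ℕ := ((List.range p).map Theta2).count x

end PD

/-!
For `m ≥ 1` we have `E (m+1) i = σ(E m i)·a`, and in `D∞ = σ(D∞)` the letter `b` stands
only at odd positions and the factor `aaa` only at even ones. A factor `w` with envelope
`E (m+1) i` contains `b` or has length at least three (`a` and `aa` lie in `E 1 2`), so all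
its occurrences have the parity of `|μ₁|`. After prepending the `a` that precedes `w` in the
envelope when `|μ₁|` is odd, `w` is aligned with the `σ`-blocks: `w = σ(v)` or `σ(v)·a` with
`Env(v) = E m i`, and desubstituting an occurrence of `w` gives one of `v`, which extends by
induction on `m`. The enumeration of occurrences then follows because `Nat.nth` commutes with
translating an infinite set.
-/

namespace PD

theorem sub_eq (c : Bool) : sub c = [false, !c] := by cases c <;> rfl

@[simp] theorem subW_nil : subW [] = [] := rfl

theorem subW_cons (c : Bool) (l : List Bool) : subW (c :: l) = false :: (!c) :: subW l := by
  simp [subW, sub_eq]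

theorem subW_append (x y : List Bool) : subW (x ++ y) = subW x ++ subW y :=
  List.flatMap_append

@[simp] theorem length_subW (l : List Bool) : (subW l).length = 2 * l.length := by
  induction l with
  | nil => rfl
  | cons c l ih => simp [subW_cons, ih]; ring

theorem subW_injective : Function.Injective subW := by
  intro x
  induction x with
  | nil => intro y h; simpa [eq_comm] using congrArg List.length h
  | cons c x ih =>
    rintro (_ | ⟨d, y⟩) h
    · simp [subW_cons] at h
    · simp only [subW_cons, List.cons.injEq, Bool.not_inj_iff, true_and] at h
      rw [h.1, ih h.2]

theorem getD_subW_two_mul (l : List Bool) (t : ℕ) : (subW l).getD (2 * t) false = false := by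
  induction l generalizing t with
  | nil => rfl
  | cons c l ih =>
    cases t with
    | zero => simp [subW_cons]
    | succ t => simpa [subW_cons, Nat.mul_succ] using ih t

theorem getD_subW_two_mul_add_one (l : List Bool) {t : ℕ} (ht : t < l.length) :
    (subW l).getD (2 * t + 1) false = !l.getD t false := by
  induction l generalizing t with
  | nil => simp at ht
  | cons c l ih =>
    cases t with
    | zero => simp [subW_cons]
    | succ t =>
      simpa [subW_cons, Nat.mul_succ, Nat.add_right_comm _ 2 1] using ih (by simpa using ht)

theorem A_succ (m : ℕ) : A (m + 1) = subW (A m) :=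
  Function.iterate_succ_apply' _ _ _

theorem length_A (m : ℕ) : (A m).length = 2 ^ m := by
  induction m with
  | zero => rfl
  | succ m ih => rw [A_succ, length_subW, ih, pow_succ, mul_comm]

theorem A_prefix_A_succ (m : ℕ) : A m <+: A (m + 1) := by
  induction m with
  | zero => exact ⟨[true], rfl⟩
  | succ m ih =>
    obtain ⟨t, ht⟩ := ih
    exact ⟨subW t, by rw [A_succ, A_succ (m + 1), ← ht, subW_append]⟩

theorem A_prefix_of_le {m m' : ℕ} (h : m ≤ m') : A m <+: A m' := by
  induction h with
  | refl => exact List.prefix_refl _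
  | step _ ih => exact ih.trans (A_prefix_A_succ _)

theorem getD_A_of_le {m m' n : ℕ} (hle : m ≤ m') (hn : n < 2 ^ m) :
    (A m').getD n false = (A m).getD n false := by
  obtain ⟨t, ht⟩ := A_prefix_of_le hle
  rw [← ht, List.getD_append _ _ _ _ (by rwa [length_A])]

theorem D_eq_getD_A {m n : ℕ} (h : n < 2 ^ m) : D n = (A m).getD n false := by
  have hn : n < 2 ^ (n + 1) :=
    Nat.lt_two_pow_self.trans (Nat.pow_lt_pow_right one_lt_two n.lt_succ_self)
  rcases le_total (n + 1) m with hle | hle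
  · exact (getD_A_of_le hle hn).symm
  · exact getD_A_of_le hle h

theorem D_two_mul (n : ℕ) : D (2 * n) = false := by
  rw [D_eq_getD_A (m := n + 1) (by rw [pow_succ]; linarith [n.lt_two_pow_self]), A_succ,
    getD_subW_two_mul]

theorem D_two_mul_add_one (n : ℕ) : D (2 * n + 1) = !D n := by
  have hn := n.lt_two_pow_self
  rw [D_eq_getD_A (m := n + 1) (by rw [pow_succ]; omega), A_succ,
    getD_subW_two_mul_add_one _ (by rwa [length_A]), D_eq_getD_A hn]

theorem mod_two_eq_one_of_D_eq_true {n : ℕ} (h : D n = true) : n % 2 = 1 := by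
  obtain ⟨t, rfl | rfl⟩ : ∃ t, n = 2 * t ∨ n = 2 * t + 1 := ⟨n / 2, by omega⟩
  · simp [D_two_mul] at h
  · omega

def window (j n : ℕ) : List Bool := (List.range n).map fun k => D (j + k)

@[simp] theorem length_window (j n : ℕ) : (window j n).length = n := by simp [window]

theorem window_add (j a b : ℕ) : window j (a + b) = window j a ++ window (j + a) b := by
  simp [window, List.range_add, Function.comp_def, Nat.add_assoc]

theorem window_one (j : ℕ) : window j 1 = [D j] := rfl

theorem window_two_mul (j n : ℕ) : window (2 * j) (2 * n) = subW (window j n) := by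
  induction n with
  | zero => rfl
  | succ n ih =>
    rw [Nat.mul_succ, window_add, ih, window_add, subW_append, window_one,
      show window (2 * j + 2 * n) 2 = [D (2 * (j + n)), D (2 * (j + n) + 1)] by
        simp [window, List.range_succ, Nat.mul_add, Nat.add_assoc],
      D_two_mul, D_two_mul_add_one, subW_cons, subW_nil]

/-- `OccursD`, but 0-indexed. -/
def Occ (w : List Bool) (j : ℕ) : Prop := window j w.length = w

theorem occursD_iff_occ {w : List Bool} {j : ℕ} : OccursD w j ↔ 1 ≤ j ∧ Occ w (j - 1) := by
  refine and_congr_right fun _ => ⟨fun h => ?_, fun h k hk => ?_⟩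
  · refine List.ext_getElem (by simp) fun k hk hk' => ?_
    simpa [window, List.getElem?_eq_getElem hk'] using h k hk'
  · rw [← h]
    simp [window, hk]

theorem Occ.infix {μ₁ w μ₂ : List Bool} {e : ℕ} (h : Occ (μ₁ ++ w ++ μ₂) e) :
    Occ w (e + μ₁.length) := by
  unfold Occ at h
  rw [List.length_append, List.length_append, window_add, window_add] at h
  exact (List.append_inj (List.append_inj h (by simp)).1 (by simp)).2

theorem Occ.getElem {w : List Bool} {j k : ℕ} (h : Occ w j) (hk : k < w.length) :
    D (j + k) = w[k] := by
  rw [← List.getElem_of_eq h (by simpa using hk)]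
  simp [window]

theorem Occ.of_prefix {u w : List Bool} {j : ℕ} (hu : u <+: w) (h : Occ w j) : Occ u j := by
  obtain ⟨t, rfl⟩ := hu
  simpa using (show Occ ([] ++ u ++ t) j by simpa using h).infix

theorem occ_subW {v : List Bool} {s : ℕ} (h : Occ v s) : Occ (subW v) (2 * s) := by
  rw [Occ, length_subW, window_two_mul, h]

theorem occ_of_occ_subW {v : List Bool} {s : ℕ} (h : Occ (subW v) (2 * s)) : Occ v s :=
  subW_injective (by rwa [Occ, length_subW, window_two_mul] at h)

theorem occ_subW_concat {v : List Bool} {s : ℕ} (h : Occ v s) :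
    Occ (subW v ++ [false]) (2 * s) := by
  rw [Occ, List.length_append, window_add, occ_subW h, List.length_singleton, window_one,
    length_subW, ← Nat.mul_add, D_two_mul]

theorem occ_false_cons {w : List Bool} {s : ℕ} (h : Occ w (2 * s + 1)) :
    Occ (false :: w) (2 * s) := by
  rw [Occ, List.length_cons, Nat.add_comm, window_add, window_one, D_two_mul, h]
  rfl

theorem eq_replicate_false_of_true_not_mem {w : List Bool} (h : true ∉ w) :
    w = List.replicate w.length false :=
  List.eq_replicate_iff.2 ⟨rfl, fun b hb => by cases b <;> simp_all⟩

theorem mod_two_eq_zero_of_occ_aaa {j : ℕ} (h : Occ [false, false, false] j) : j % 2 = 0 := by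
  obtain ⟨s, rfl | rfl⟩ : ∃ s, j = 2 * s ∨ j = 2 * s + 1 := ⟨j / 2, by omega⟩
  · omega
  · have h₀ := h.getElem (k := 0) (by simp)
    have h₂ := h.getElem (k := 2) (by simp)
    rw [Nat.add_zero, D_two_mul_add_one] at h₀
    rw [show 2 * s + 1 + 2 = 2 * (s + 1) + 1 by ring, D_two_mul_add_one] at h₂
    have := mod_two_eq_one_of_D_eq_true (by simpa using h₀)
    have := mod_two_eq_one_of_D_eq_true (by simpa using h₂)
    omega

theorem Occ.mod_two_eq {w : List Bool} {j j' : ℕ} (hw : true ∈ w ∨ 3 ≤ w.length)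
    (h : Occ w j) (h' : Occ w j') : j % 2 = j' % 2 := by
  by_cases hb : true ∈ w
  · obtain ⟨k, hk, hwk⟩ := List.getElem_of_mem hb
    have := mod_two_eq_one_of_D_eq_true ((h.getElem hk).trans hwk)
    have := mod_two_eq_one_of_D_eq_true ((h'.getElem hk).trans hwk)
    omega
  · have haaa : [false, false, false] <+: w := by
      rw [eq_replicate_false_of_true_not_mem hb, List.prefix_replicate_iff]
      exact ⟨by simpa [hb] using hw, rfl⟩
    rw [mod_two_eq_zero_of_occ_aaa (h.of_prefix haaa),
      mod_two_eq_zero_of_occ_aaa (h'.of_prefix haaa)]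

theorem E_one_one : E 1 1 = [false] := rfl

theorem E_one_of_ne_one {i : ℕ} (hi : i ≠ 1) : E 1 i = [false, false] := by
  simp only [E, if_neg hi]
  rfl

theorem dropLast_subW {l : List Bool} (h : l ≠ []) :
    (subW l).dropLast = subW l.dropLast ++ [false] := by
  conv_lhs => rw [← List.dropLast_append_getLast h]
  simp [subW_append, subW_cons]

theorem A_ne_nil (m : ℕ) : A m ≠ [] :=
  List.ne_nil_of_length_pos (by rw [length_A]; positivity)

theorem E_succ {m : ℕ} (hm : 1 ≤ m) (i : ℕ) : E (m + 1) i = subW (E m i) ++ [false] := by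
  unfold E
  split_ifs
  · rw [A_succ, dropLast_subW (A_ne_nil m)]
  · rw [subW_append, List.append_assoc, ← dropLast_subW (A_ne_nil m), ← A_succ,
      Nat.add_sub_cancel, ← A_succ, Nat.sub_add_cancel hm]

theorem exists_occ_E_ge {m : ℕ} (hm : 1 ≤ m) (i N : ℕ) : ∃ e, N ≤ e ∧ Occ (E m i) e := by
  induction m, hm using Nat.le_induction generalizing N with
  | base =>
    by_cases hi : i = 1
    · refine ⟨2 * N, by omega, ?_⟩
      rw [hi, E_one_one, Occ, List.length_singleton, window_one, D_two_mul]
    · refine ⟨2 * (2 * (2 * N) + 1), by omega, ?_⟩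
      rw [E_one_of_ne_one hi, show [false, false] = subW [true] from rfl]
      refine occ_subW ?_
      rw [Occ, List.length_singleton, window_one, D_two_mul_add_one, D_two_mul]
      rfl
  | succ m hm ih =>
    obtain ⟨e, he, hocc⟩ := ih N
    exact ⟨2 * e, by omega, E_succ hm i ▸ occ_subW_concat hocc⟩

theorem subW_concat_eq_append {X μ r : List Bool} {q : ℕ} (h : subW X ++ [false] = μ ++ r)
    (hμ : μ.length = 2 * q) : μ = subW (X.take q) ∧ r = subW (X.drop q) ++ [false] := by
  have hq : q ≤ X.length := by
    have := congrArg List.length h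
    simp only [List.length_append, length_subW, List.length_singleton] at this
    omega
  rw [← List.take_append_drop q X, subW_append, List.append_assoc] at h
  obtain ⟨h₁, h₂⟩ := List.append_inj h (by simp [hμ, hq])
  exact ⟨h₁.symm, h₂.symm⟩

theorem eq_false_of_subW_concat_eq_append_cons {X μ r : List Bool} {c : Bool} {q : ℕ}
    (h : subW X ++ [false] = μ ++ c :: r) (hμ : μ.length = 2 * q) : c = false := by
  have h₂ := (subW_concat_eq_append h hμ).2
  cases hX : X.drop q with
  | nil => simp_all
  | cons x X' => simp_all [subW_cons]

theorem exists_prefix_of_prefix_subW_concat {w Y : List Bool} (h : w <+: subW Y ++ [false]) :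
    ∃ v, v <+: Y ∧ (w = subW v ∨ w = subW v ++ [false]) := by
  induction Y generalizing w with
  | nil =>
    rcases List.prefix_cons_iff.1 h with rfl | ⟨t, rfl, ht⟩
    · exact ⟨[], List.nil_prefix, Or.inl rfl⟩
    · exact ⟨[], List.nil_prefix, Or.inr (by simpa using ht)⟩
  | cons c Y ih =>
    rw [subW_cons, List.cons_append, List.cons_append] at h
    match w, h with
    | [], _ => exact ⟨[], List.nil_prefix, Or.inl rfl⟩
    | [x], h => exact ⟨[], List.nil_prefix, Or.inr (by simp_all)⟩
    | x :: y :: w', h =>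
      obtain ⟨rfl, rfl, hw'⟩ := by simpa using h
      obtain ⟨v, hv, hw⟩ := ih hw'
      exact ⟨c :: v, List.cons_prefix_cons.2 ⟨rfl, hv⟩, by simpa [subW_cons] using hw⟩

theorem subW_concat_infix {u z : List Bool} (h : u <:+: z) :
    subW u ++ [false] <:+: subW z ++ [false] := by
  obtain ⟨s, t, rfl⟩ := h
  obtain ⟨r, hr⟩ : ∃ r, subW t ++ [false] = false :: r := by
    cases t with
    | nil => exact ⟨[], rfl⟩
    | cons c t => exact ⟨_, by rw [subW_cons]; rfl⟩
  exact ⟨subW s, r, by simp [subW_append, hr]⟩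

theorem IsEnv.true_mem_or_three_le_length {w : List Bool} {m i : ℕ} (h : IsEnv w m i)
    (hm : 2 ≤ m) : true ∈ w ∨ 3 ≤ w.length := by
  by_contra! hw
  refine h.2.2.2 1 2 le_rfl (Or.inr rfl) (Or.inl hm) ?_
  rw [E_one_of_ne_one (by decide), show [false, false] = List.replicate 2 false from rfl,
    List.infix_replicate_iff]
  exact ⟨by omega, eq_replicate_false_of_true_not_mem hw.1⟩

theorem IsEnv.cons {w : List Bool} {m i : ℕ} (h : IsEnv w m i) {c : Bool}
    (hc : c :: w <:+: E m i) : IsEnv (c :: w) m i :=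
  ⟨h.1, h.2.1, hc, fun m' i' hm' hi' hlt hin =>
    h.2.2.2 m' i' hm' hi' hlt ((List.suffix_cons c w).isInfix.trans hin)⟩

theorem IsEnv.of_subW {w v : List Bool} {m i : ℕ} (h : IsEnv w (m + 1) i) (hm : 1 ≤ m)
    (hv : v <:+: E m i) (hw : w <+: subW v ++ [false]) : IsEnv v m i := by
  refine ⟨hm, h.2.1, hv, fun m' i' hm' hi' hlt hin => ?_⟩
  refine h.2.2.2 (m' + 1) i' (by omega) hi' (by unfold EnvLt at *; omega) ?_
  rw [E_succ hm']
  exact hw.isInfix.trans (subW_concat_infix hin)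

def EnvelopeExtends (m : ℕ) : Prop :=
  ∀ i w μ₁ μ₂ j, w ≠ [] → IsEnv w m i → E m i = μ₁ ++ w ++ μ₂ → Occ w j →
    ∃ e, Occ (E m i) e ∧ j = e + μ₁.length

theorem envelopeExtends_one : EnvelopeExtends 1 := by
  intro i w μ₁ μ₂ j hw henv hsplit hj
  have hlen := congrArg List.length hsplit
  simp only [List.length_append] at hlen
  have hlen_le : (E 1 i).length ≤ w.length := by
    rcases henv.2.1 with rfl | rfl
    · simpa [E_one_one, Nat.one_le_iff_ne_zero] using hw
    · by_contra! hlt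
      have hin := henv.2.2.1
      rw [E_one_of_ne_one (by decide), show [false, false] = List.replicate 2 false from rfl,
        List.infix_replicate_iff] at hin
      have hw₁ : w.length = 1 := by
        have := List.length_pos_of_ne_nil hw
        simp [E_one_of_ne_one] at hlt
        omega
      refine henv.2.2.2 1 1 le_rfl (Or.inl rfl) (Or.inr ⟨rfl, one_lt_two⟩) ?_
      rw [hin.2, hw₁, E_one_one]
      exact List.infix_refl _
  obtain ⟨rfl, rfl⟩ : μ₁ = [] ∧ μ₂ = [] := by simp only [← List.length_eq_zero_iff]; omega
  exact ⟨j, by simpa [hsplit] using hj, rfl⟩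

theorem EnvelopeExtends.succ_of_even {m : ℕ} (ih : EnvelopeExtends m) (hm : 1 ≤ m) {i : ℕ}
    {w μ₁ μ₂ : List Bool} {q s : ℕ} (henv : IsEnv w (m + 1) i)
    (hsplit : E (m + 1) i = μ₁ ++ w ++ μ₂) (hμ₁ : μ₁.length = 2 * q) (hj : Occ w (2 * s)) :
    ∃ e, Occ (E (m + 1) i) e ∧ 2 * s = e + 2 * q := by
  rw [E_succ hm, List.append_assoc] at hsplit
  obtain ⟨hμ₁X, hrest⟩ := subW_concat_eq_append hsplit hμ₁
  obtain ⟨v, ⟨t, hvt⟩, hwv⟩ :=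
    exists_prefix_of_prefix_subW_concat (hrest ▸ List.prefix_append w μ₂)
  have hX : E m i = (E m i).take q ++ v ++ t := by
    rw [List.append_assoc, hvt, List.take_append_drop]
  have hvenv : IsEnv v m i := henv.of_subW hm ⟨_, _, hX.symm⟩ <| by
    rcases hwv with rfl | rfl
    exacts [List.prefix_append _ _, List.prefix_refl _]
  have hv : v ≠ [] := by
    rintro rfl
    have := henv.true_mem_or_three_le_length (by omega)
    rcases hwv with rfl | rfl <;> simp at this
  have hvocc : Occ v s := occ_of_occ_subW <| hj.of_prefix <| by
    rcases hwv with rfl | rfl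
    exacts [List.prefix_refl _, List.prefix_append _ _]
  obtain ⟨e, he, rfl⟩ := ih i v _ _ s hv hvenv hX hvocc
  have hq : ((E m i).take q).length = q := by
    simpa [hμ₁] using (congrArg List.length hμ₁X).symm
  exact ⟨2 * e, E_succ hm i ▸ occ_subW_concat he, by omega⟩

theorem EnvelopeExtends.succ {m : ℕ} (ih : EnvelopeExtends m) (hm : 1 ≤ m) :
    EnvelopeExtends (m + 1) := by
  intro i w μ₁ μ₂ j hw henv hsplit hj
  have hpar : j % 2 = μ₁.length % 2 := by
    obtain ⟨e, -, he⟩ := exists_occ_E_ge hm i 0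
    have hE : Occ (μ₁ ++ w ++ μ₂) (2 * e) := hsplit ▸ E_succ hm i ▸ occ_subW_concat he
    have := Occ.mod_two_eq (henv.true_mem_or_three_le_length (by omega)) hj hE.infix
    omega
  obtain ⟨q, hq | hq⟩ := Nat.even_or_odd' μ₁.length
  · obtain ⟨s, rfl⟩ : ∃ s, j = 2 * s := ⟨j / 2, by omega⟩
    obtain ⟨e, he, hs⟩ := ih.succ_of_even hm henv hsplit hq hj
    exact ⟨e, he, by omega⟩
  · -- the letter just before `w` in `E (m + 1) i` is an `a`; prepending it makes `μ₁` even
    obtain ⟨s, rfl⟩ : ∃ s, j = 2 * s + 1 := ⟨j / 2, by omega⟩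
    obtain ⟨μ, c, rfl⟩ : ∃ μ c, μ₁ = μ ++ [c] := by
      rcases List.eq_nil_or_concat μ₁ with rfl | ⟨μ, c, rfl⟩
      · simp at hq
      · exact ⟨μ, c, List.concat_eq_append⟩
    have hμ : μ.length = 2 * q := by simpa using hq
    have hsplit' : E (m + 1) i = μ ++ c :: w ++ μ₂ := by simpa using hsplit
    obtain rfl : c = false :=
      eq_false_of_subW_concat_eq_append_cons (r := w ++ μ₂)
        (by rw [← E_succ hm, hsplit']; simp) hμ
    obtain ⟨e, he, hs⟩ :=
      ih.succ_of_even hm (henv.cons ⟨_, _, hsplit'.symm⟩) hsplit' hμ (occ_false_cons hj)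
    exact ⟨e, he, by simp; omega⟩

theorem envelopeExtends {m : ℕ} (hm : 1 ≤ m) : EnvelopeExtends m := by
  induction m, hm using Nat.le_induction with
  | base => exact envelopeExtends_one
  | succ m hm ih => exact ih.succ hm

theorem occursD_iff_of_isEnv {w μ₁ μ₂ : List Bool} {m i : ℕ} (hw : w ≠ [])
    (henv : IsEnv w m i) (hsplit : E m i = μ₁ ++ w ++ μ₂) (j : ℕ) :
    OccursD w j ↔ ∃ e, OccursD (E m i) e ∧ j = e + μ₁.length := by
  simp only [occursD_iff_occ]
  constructor
  · rintro ⟨hj, hocc⟩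
    obtain ⟨e, he, hje⟩ := envelopeExtends henv.1 i w μ₁ μ₂ (j - 1) hw henv hsplit hocc
    exact ⟨e + 1, ⟨by omega, by simpa using he⟩, by omega⟩
  · rintro ⟨e, ⟨he, hocc⟩, rfl⟩
    refine ⟨by omega, ?_⟩
    rw [show e + μ₁.length - 1 = e - 1 + μ₁.length by omega]
    exact (hsplit ▸ hocc).infix

theorem infinite_setOf_occursD_E {m : ℕ} (hm : 1 ≤ m) (i : ℕ) :
    {e | OccursD (E m i) e}.Infinite :=
  Set.infinite_of_forall_exists_gt fun a => by
    obtain ⟨e, he, hocc⟩ := exists_occ_E_ge hm i a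
    exact ⟨e + 1, occursD_iff_occ.2 ⟨by omega, by simpa using hocc⟩, by omega⟩

end PD

theorem Nat.nth_eq_nth_add_of_iff {p q : ℕ → Prop} {c : ℕ} (hp : (Set.ofPred p).Infinite)
    (h : ∀ j, q j ↔ ∃ e, p e ∧ j = e + c) (n : ℕ) : Nat.nth q n = Nat.nth p n + c := by
  have hq : (Set.ofPred q).Infinite := Set.infinite_of_forall_exists_gt fun a => by
    obtain ⟨e, he, hae⟩ := hp.exists_gt a
    exact ⟨e + c, (h _).2 ⟨e, he, rfl⟩, by omega⟩
  have hpq : (fun e => q (e + c)) = p := funext fun e => propext <| by simp [h]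
  rw [← Nat.nth_comp_of_strictMono (f := (· + c)) (strictMono_id.add_const c)
    (fun k hk => by obtain ⟨e, -, rfl⟩ := (h k).1 hk; exact ⟨e, rfl⟩)
    (fun hf => absurd hf hq), hpq]

open PD

theorem doubling_envelope_unique_strong_general (w : List Bool) (hw : w ≠ [])
    (m i : ℕ) (henv : IsEnv w m i)
    (μ₁ μ₂ : List Bool) (hsplit : E m i = μ₁ ++ w ++ μ₂) :
    (∀ p, 1 ≤ p → L w p = L (E m i) p + μ₁.length) ∧
      {j : ℕ | OccursD w j} = {j : ℕ | ∃ p, 1 ≤ p ∧ j = L (E m i) p + μ₁.length} := by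
  have hocc := occursD_iff_of_isEnv hw henv hsplit
  have hinf := infinite_setOf_occursD_E henv.1 i
  refine ⟨fun p _ => Nat.nth_eq_nth_add_of_iff hinf hocc (p - 1), Set.ext fun j => ?_⟩
  simp only [Set.mem_ofPred_eq, hocc]
  constructor
  · rintro ⟨e, he, rfl⟩
    obtain ⟨n, rfl⟩ : e ∈ Set.range (Nat.nth (OccursD (E m i))) := by
      rwa [Nat.range_nth_of_infinite hinf]
    exact ⟨n + 1, by omega, rfl⟩
  · rintro ⟨p, -, rfl⟩
    exact ⟨_, Nat.nth_mem_of_infinite hinf _, rfl⟩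

/-- Uniqueness of envelope extension, strong version: if `w` is a nonempty factor
of the doubling sequence with `Env(w) = E m i` and `E m i = μ₁ · w · μ₂`, then for
every `p ≥ 1` the `p`-th occurrence of `w` lies inside the `p`-th occurrence of
`E m i`: `L(w,p) = L(E m i, p) + |μ₁|`; equivalently, the set of starting
positions of occurrences of `w` is exactly `{L(E m i, p) + |μ₁| : p ≥ 1}`. -/
theorem doubling_envelope_unique_strong (w : List Bool) (hw : w ≠ []) (hfac : FactorD w)
    (m i : ℕ) (henv : IsEnv w m i)
    (μ₁ μ₂ : List Bool) (hsplit : E m i = μ₁ ++ w ++ μ₂) :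
    (∀ p, 1 ≤ p → L w p = L (E m i) p + μ₁.length) ∧
      {j : ℕ | OccursD w j} = {j : ℕ | ∃ p, 1 ≤ p ∧ j = L (E m i) p + μ₁.length} :=
  doubling_envelope_unique_strong_general w hw m i henv μ₁ μ₂ hsplit
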